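/- arXiv:1508.00956 — 4 statements merged into one kernel-verified Lean document; each statement's English description precedes it below -/
import Mathlib

section
/- For every t ≥ 1, μ_t = 3π_{t−1}, and consequently π_t = 3π_{t−1} + λ_t + ν_t. -/
open Filter Finset

/-- A letter of the alphabet `{1,2,3}`. -/
abbrev Letter := Fin 3

/-- A word: a finite (possibly empty) sequence of letters. -/
abbrev Word := List Letter

/-- Adjacency of two words: `σ ≠ τ`, and writing `σ = β ++ σ'`, `τ = β ++ τ'` with `β`
the longest common prefix, either one of `σ'`, `τ'` is empty and the other uses at most two
distinct letters, or `σ' = i j^k` and `τ' = j i^{k'}` for distinct letters `i ≠ j`. -/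
def WordAdj (σ τ : Word) : Prop :=
  σ ≠ τ ∧ ∃ β σ' τ' : Word,
    σ = β ++ σ' ∧ τ = β ++ τ' ∧
    ((σ' = [] ∧ τ'.toFinset.card ≤ 2) ∨
     (τ' = [] ∧ σ'.toFinset.card ≤ 2) ∨
     (∃ (i j : Letter) (k k' : ℕ), i ≠ j ∧
        σ' = i :: List.replicate k j ∧ τ' = j :: List.replicate k' i))

/-- The graph `G_t`: vertices are the words of length at most `t` (all other words are
isolated), with adjacency `WordAdj`. -/
def Gt (t : ℕ) : SimpleGraph Word where
  Adj σ τ := σ.length ≤ t ∧ τ.length ≤ t ∧ WordAdj σ τ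
  symm := by
    constructor
    rintro σ τ ⟨h1, h2, hne, β, σ', τ', e1, e2, h3⟩
    refine ⟨h2, h1, hne.symm, β, τ', σ', e2, e1, ?_⟩
    rcases h3 with h | h | ⟨i, j, k, k', hij, hs, ht⟩
    · exact Or.inr (Or.inl h)
    · exact Or.inl h
    · exact Or.inr (Or.inr ⟨j, i, k', k, hij.symm, ht, hs⟩)
  loopless := ⟨fun σ h => h.2.2.1 rfl⟩

/-- `dW t σ τ` is the geodesic distance `d_t(σ,τ)` in the graph `G_t`. -/
noncomputable def dW (t : ℕ) (σ τ : Word) : ℕ := (Gt t).dist σ τ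

/-- Length of the longest suffix of `σ` using at most two distinct letters. -/
def suffLen (σ : Word) : ℕ :=
  Nat.findGreatest (fun m => (σ.drop (σ.length - m)).toFinset.card ≤ 2) σ.length

/-- `fW σ = τ₂` where `σ = τ₂τ₁` and `τ₁` is the longest suffix of `σ` using at most two
distinct letters; `fW [] = []`. -/
def fW (σ : Word) : Word := σ.take (σ.length - suffLen σ)

/-- `ω(σ)`: the least `n ≥ 0` with `f^[n] σ = ∅`. -/
noncomputable def omegaW (σ : Word) : ℕ := sInf {n : ℕ | fW^[n] σ = []}

/-- `L(σ) = d_{|σ|}(σ, ∅) - 1` for nonempty `σ`, and `L(∅) = 0`. -/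
noncomputable def Lw (σ : Word) : ℕ := if σ = [] then 0 else dW σ.length σ [] - 1

/-- `ᾱ_m`: the average of `L` over the `3^m` words of length `m`. -/
noncomputable def alphaBar (m : ℕ) : ℝ :=
  (∑ v : Fin m → Letter, (Lw (List.ofFn v) : ℝ)) / 3 ^ m

/-- `α* = sup_{m ≥ 1} ᾱ_m / m`. -/
noncomputable def alphaStar : ℝ :=
  sSup {x : ℝ | ∃ m : ℕ, 1 ≤ m ∧ x = alphaBar m / m}

/-- `#V_t = (3^{t+1} - 1)/2`, the number of vertices of `G_t`, as a real number. -/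
noncomputable def Nv (t : ℕ) : ℝ := ((3 : ℝ) ^ (t + 1) - 1) / 2

/-- The sum of `d_t(σ,τ)` over all ordered pairs of words `σ, τ ∈ V_t`
(twice the sum over unordered pairs of distinct words). -/
noncomputable def pairSum (t : ℕ) : ℝ :=
  ∑ k ∈ range (t + 1), ∑ l ∈ range (t + 1),
    ∑ v : Fin k → Letter, ∑ w : Fin l → Letter,
      (dW t (List.ofFn v) (List.ofFn w) : ℝ)

/-- The average path length `D̄(t)` of `G_t`. -/
noncomputable def Dbar (t : ℕ) : ℝ := pairSum t / (Nv t * (Nv t - 1))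

/-- `κ_t = (Σ_{σ ∈ V_t} L(σ)) / #V_t`. -/
noncomputable def kappa (t : ℕ) : ℝ :=
  (∑ k ∈ range (t + 1), ∑ v : Fin k → Letter, (Lw (List.ofFn v) : ℝ)) / Nv t

/-- `π_t`: the sum of `d_t(σ,τ)` over unordered pairs of distinct `σ, τ ∈ V_t`. -/
noncomputable def piT (t : ℕ) : ℝ := pairSum t / 2

/-- `μ_t`: the sum of `d_t(σ,τ)` over unordered pairs of distinct `σ, τ ∈ V_t`
having the same first letter. -/
noncomputable def muT (t : ℕ) : ℝ :=
  (∑ i : Letter, ∑ k ∈ range t, ∑ l ∈ range t,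
    ∑ v : Fin k → Letter, ∑ w : Fin l → Letter,
      (dW t (i :: List.ofFn v) (i :: List.ofFn w) : ℝ)) / 2

/-- `λ_t = Σ_{σ ∈ V_t, σ ≠ ∅} d_t(σ, ∅)`. -/
noncomputable def lambdaT (t : ℕ) : ℝ :=
  ∑ k ∈ Finset.Icc 1 t, ∑ v : Fin k → Letter, (dW t (List.ofFn v) [] : ℝ)

/-- `ν_t = Σ_{i<j} Σ_{|σ'|,|τ'| ≤ t-1} d_t(iσ', jτ')`. -/
noncomputable def nuT (t : ℕ) : ℝ :=
  ∑ i : Letter, ∑ j : Letter,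
    if i < j then
      ∑ k ∈ range t, ∑ l ∈ range t,
        ∑ v : Fin k → Letter, ∑ w : Fin l → Letter,
          (dW t (i :: List.ofFn v) (j :: List.ofFn w) : ℝ)
    else 0

/-- `IsNormalDecomp σ τs`: `τs = [τ₁, …, τ_l]` (with `l ≥ 1`) is a normal decomposition
of `σ`: `σ = τ₁⋯τ_l`; `#τ₁ ≤ 2`, `|τ₁| ≥ 1`; `#τ_i = 2`, `|τ_i| ≥ 2` for `i ≥ 2`; and for
`i < l` the last letter of `τ_i` is the unique letter of the alphabet not appearing
in `τ_{i+1}`. -/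
def IsNormalDecomp (σ : Word) (τs : List Word) : Prop :=
  σ = τs.flatten ∧ τs ≠ [] ∧
  (∀ i : Fin τs.length,
    (i.1 = 0 → 1 ≤ (τs.get i).length ∧ (τs.get i).toFinset.card ≤ 2) ∧
    (1 ≤ i.1 → 2 ≤ (τs.get i).length ∧ (τs.get i).toFinset.card = 2)) ∧
  (∀ i : ℕ, ∀ h : i + 1 < τs.length,
    ∃ c : Letter, (τs.get ⟨i, Nat.lt_of_succ_lt h⟩).getLast? = some c ∧
      c ∉ (τs.get ⟨i + 1, h⟩).toFinset ∧
      ∀ c' : Letter, c' ∉ (τs.get ⟨i + 1, h⟩).toFinset → c' = c)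

/-- `W_{k₁⋯k_l}`: the number of words of length `k₁ + ⋯ + k_l` admitting a normal
decomposition into blocks of lengths `k₁, …, k_l`. -/
noncomputable def Wcount (ks : List ℕ) : ℕ :=
  Nat.card {σ : Word // ∃ τs : List Word, IsNormalDecomp σ τs ∧ τs.map List.length = ks}

/-- `Ē(t) = 3^{-t} Σ_{q ≥ 1} Σ_{k₁ ≥ 1, k₂,…,k_q ≥ 2, k₁+⋯+k_q = t} (q-1)·W_{k₁⋯k_q}`. -/
noncomputable def Ebar (t : ℕ) : ℝ :=
  ((∑ c : Composition t,
      if ∀ i ∈ c.blocks.tail, 2 ≤ i then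
        (c.blocks.length - 1) * Wcount c.blocks
      else 0 : ℕ) : ℝ) / 3 ^ t

/-!
Prefixing a letter `i` embeds `G_t` into `G_{t+1}`, and deleting a leading `i` (while sending
every word that does not start with `i` to `∅`) is a retraction `G_{t+1} → G_t` which maps
adjacent words to equal or adjacent words: a word `iσ` can only be adjacent to a word outside
the branch `iV_t` when `σ` uses at most two letters, that is, when `σ ~ ∅` in `G_t`. Hence
`d_{t+1}(iσ, iτ) = d_t(σ, τ)`, so `μ_{t+1} = 3π_t`. Splitting the pairs of words of `V_{t+1}`
according to their first letters gives `π_{t+1} = μ_{t+1} + λ_{t+1} + ν_{t+1}`.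
-/

namespace SimpleGraph

variable {V W : Type*} {G : SimpleGraph V} {G' : SimpleGraph W}

theorem Walk.exists_length_le_of_adj_imp {f : V → W}
    (hf : ∀ u v, G.Adj u v → f u = f v ∨ G'.Adj (f u) (f v)) {u v : V} (p : G.Walk u v) :
    ∃ q : G'.Walk (f u) (f v), q.length ≤ p.length := by
  induction p with
  | nil => exact ⟨.nil, le_rfl⟩
  | cons h p ih =>
    obtain ⟨q, hq⟩ := ih
    rcases hf _ _ h with heq | hadj
    · exact ⟨q.copy heq.symm rfl, by simp only [Walk.length_copy, Walk.length_cons]; omega⟩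
    · exact ⟨.cons hadj q, by simpa using hq⟩

theorem edist_le_of_adj_imp {f : V → W}
    (hf : ∀ u v, G.Adj u v → f u = f v ∨ G'.Adj (f u) (f v)) (u v : V) :
    G'.edist (f u) (f v) ≤ G.edist u v := by
  by_cases hr : G.Reachable u v
  · obtain ⟨p, hp⟩ := hr.exists_walk_length_eq_edist
    obtain ⟨q, hq⟩ := p.exists_length_le_of_adj_imp hf
    calc G'.edist (f u) (f v) ≤ q.length := edist_le q
      _ ≤ p.length := by exact_mod_cast hq
      _ = G.edist u v := hp
  · rw [edist_eq_top_of_not_reachable hr]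
    exact le_top

theorem dist_eq_of_leftInverse {f : V → W} {g : W → V} (hfg : Function.LeftInverse g f)
    (hf : ∀ u v, G.Adj u v → f u = f v ∨ G'.Adj (f u) (f v))
    (hg : ∀ u v, G'.Adj u v → g u = g v ∨ G.Adj (g u) (g v)) (u v : V) :
    G'.dist (f u) (f v) = G.dist u v := by
  refine congrArg ENat.toNat (le_antisymm (edist_le_of_adj_imp hf u v) ?_)
  simpa only [hfg u, hfg v] using edist_le_of_adj_imp hg (f u) (f v)

end SimpleGraph

theorem WordAdj.cons_iff {i : Letter} {σ τ : Word} : WordAdj (i :: σ) (i :: τ) ↔ WordAdj σ τ := by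
  constructor
  · rintro ⟨hne, β, σ', τ', h₁, h₂, h₃⟩
    cases β with
    | nil =>
      exfalso
      rcases h₃ with ⟨rfl, -⟩ | ⟨rfl, -⟩ | ⟨a, b, k, k', hab, rfl, rfl⟩
      · simp at h₁
      · simp at h₂
      · simp_all
    | cons c β =>
      simp only [List.cons_append, List.cons.injEq] at h₁ h₂
      exact ⟨fun h => hne (h ▸ rfl), β, σ', τ', h₁.2, h₂.2, h₃⟩
  · rintro ⟨hne, β, σ', τ', rfl, rfl, h₃⟩
    exact ⟨by simpa using hne, i :: β, σ', τ', rfl, rfl, h₃⟩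

theorem card_toFinset_le_two_of_wordAdj_cons {i : Letter} {σ w : Word}
    (hw : w.head? ≠ some i) (h : WordAdj (i :: σ) w) : σ.toFinset.card ≤ 2 := by
  obtain ⟨-, β, σ', τ', h₁, rfl, h₃⟩ := h
  cases β with
  | cons c β =>
    simp only [List.cons_append, List.cons.injEq] at h₁
    simp [← h₁.1] at hw
  | nil =>
    simp only [List.nil_append] at h₁
    rcases h₃ with ⟨rfl, -⟩ | ⟨-, hc⟩ | ⟨a, b, k, k', -, hs, -⟩
    · simp at h₁
    · rw [← h₁, List.toFinset_cons] at hc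
      exact (card_le_card (subset_insert _ _)).trans hc
    · rw [← h₁, List.cons.injEq] at hs
      rw [hs.2]
      calc (List.replicate k b).toFinset.card ≤ ({b} : Finset Letter).card :=
            card_le_card fun x hx => by simp [List.eq_of_mem_replicate (List.mem_toFinset.1 hx)]
        _ ≤ 2 := by simp

namespace Gt

variable {t : ℕ} {i : Letter} {σ τ : Word}

theorem adj_cons_iff : (Gt (t + 1)).Adj (i :: σ) (i :: τ) ↔ (Gt t).Adj σ τ := by
  simp only [Gt, List.length_cons, Nat.add_le_add_iff_right, WordAdj.cons_iff]

theorem adj_nil (hσ : σ ≠ []) (hlen : σ.length ≤ t) (hcard : σ.toFinset.card ≤ 2) :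
    (Gt t).Adj σ [] :=
  ⟨hlen, by simp, hσ, [], σ, [], by simp, by simp, .inr (.inl ⟨rfl, hcard⟩)⟩

end Gt

theorem dW_comm (t : ℕ) (σ τ : Word) : dW t σ τ = dW t τ σ := SimpleGraph.dist_comm

theorem dW_self (t : ℕ) (σ : Word) : dW t σ σ = 0 := SimpleGraph.dist_self

def retractBranch (i : Letter) (w : Word) : Word := if w.head? = some i then w.tail else []

theorem retractBranch_cons_self (i : Letter) (σ : Word) : retractBranch i (i :: σ) = σ := by
  simp [retractBranch]

theorem retractBranch_of_head?_ne {i : Letter} {w : Word} (hw : w.head? ≠ some i) :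
    retractBranch i w = [] := by
  simp [retractBranch, hw]

theorem eq_cons_or_head?_ne (i : Letter) (w : Word) : (∃ σ, w = i :: σ) ∨ w.head? ≠ some i := by
  rcases w with _ | ⟨a, σ⟩
  · simp
  · by_cases h : a = i
    · exact .inl ⟨σ, by rw [h]⟩
    · exact .inr (by simpa using h)

theorem retractBranch_cons_self_adj {t : ℕ} {i : Letter} {σ w : Word}
    (h : (Gt (t + 1)).Adj (i :: σ) w) :
    σ = retractBranch i w ∨ (Gt t).Adj σ (retractBranch i w) := by
  rcases eq_cons_or_head?_ne i w with ⟨τ, rfl⟩ | hw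
  · exact .inr (by rwa [retractBranch_cons_self, ← Gt.adj_cons_iff])
  · rw [retractBranch_of_head?_ne hw]
    obtain ⟨hlen, -, hadj⟩ := h
    by_cases hσ : σ = []
    · exact .inl hσ
    · exact .inr <| Gt.adj_nil hσ (by simpa using hlen)
        (card_toFinset_le_two_of_wordAdj_cons hw hadj)

theorem retractBranch_adj {t : ℕ} (i : Letter) {u w : Word} (h : (Gt (t + 1)).Adj u w) :
    retractBranch i u = retractBranch i w ∨ (Gt t).Adj (retractBranch i u) (retractBranch i w) := by
  rcases eq_cons_or_head?_ne i u with ⟨σ, rfl⟩ | hu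
  · rw [retractBranch_cons_self]
    exact retractBranch_cons_self_adj h
  rcases eq_cons_or_head?_ne i w with ⟨τ, rfl⟩ | hw
  · rw [retractBranch_cons_self, eq_comm, (Gt t).adj_comm]
    exact retractBranch_cons_self_adj h.symm
  · rw [retractBranch_of_head?_ne hu, retractBranch_of_head?_ne hw]
    exact .inl rfl

theorem dW_succ_cons (t : ℕ) (i : Letter) (σ τ : Word) :
    dW (t + 1) (i :: σ) (i :: τ) = dW t σ τ :=
  SimpleGraph.dist_eq_of_leftInverse (retractBranch_cons_self i)
    (fun _ _ h => .inr (Gt.adj_cons_iff.2 h)) (fun _ _ => retractBranch_adj i) σ τ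

def sumWordsUpTo (t : ℕ) (g : Word → ℝ) : ℝ :=
  ∑ k ∈ range (t + 1), ∑ v : Fin k → Letter, g (List.ofFn v)

section sumWordsUpTo

variable {t : ℕ}

theorem sumWordsUpTo_add (f g : Word → ℝ) :
    sumWordsUpTo t (fun σ => f σ + g σ) = sumWordsUpTo t f + sumWordsUpTo t g := by
  simp only [sumWordsUpTo, sum_add_distrib]

theorem sumWordsUpTo_sum {ι : Type*} (s : Finset ι) (g : ι → Word → ℝ) :
    sumWordsUpTo t (fun σ => ∑ j ∈ s, g j σ) = ∑ j ∈ s, sumWordsUpTo t (g j) := by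
  simp only [sumWordsUpTo]
  rw [sum_comm]
  exact sum_congr rfl fun _ _ => sum_comm

theorem sumWordsUpTo_sumWordsUpTo (h : Word → Word → ℝ) :
    sumWordsUpTo t (fun σ => sumWordsUpTo t (h σ)) =
      ∑ k ∈ range (t + 1), ∑ l ∈ range (t + 1), ∑ v : Fin k → Letter, ∑ w : Fin l → Letter,
        h (List.ofFn v) (List.ofFn w) := by
  simp only [sumWordsUpTo]
  exact sum_congr rfl fun _ _ => sum_comm

theorem sumWordsUpTo_comm (h : Word → Word → ℝ) :
    sumWordsUpTo t (fun σ => sumWordsUpTo t (h σ)) =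
      sumWordsUpTo t (fun τ => sumWordsUpTo t (fun σ => h σ τ)) := by
  simp only [sumWordsUpTo_sumWordsUpTo]
  rw [sum_comm]
  exact sum_congr rfl fun _ _ => sum_congr rfl fun _ _ => sum_comm

theorem sumWordsUpTo_succ (g : Word → ℝ) :
    sumWordsUpTo (t + 1) g = g [] + ∑ i, sumWordsUpTo t (fun σ => g (i :: σ)) := by
  rw [sumWordsUpTo, sum_range_succ', add_comm, ← sumWordsUpTo_sum]
  congr 1
  · simp
  · refine sum_congr rfl fun k _ => ?_
    rw [← (Fin.consEquiv fun _ => Letter).sum_comp, Fintype.sum_prod_type]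
    simp only [Fin.consEquiv, Equiv.coe_fn_mk, List.ofFn_succ, Fin.cons_zero, Fin.cons_succ]
    exact Finset.sum_comm

end sumWordsUpTo

theorem Finset.sum_sum_eq_sum_diag_add_two_nsmul {α M : Type*} [Fintype α] [LinearOrder α]
    [AddCommMonoid M] (B : α → α → M) (hB : ∀ i j, B i j = B j i) :
    ∑ i, ∑ j, B i j = ∑ i, B i i + 2 • ∑ i, ∑ j, if i < j then B i j else 0 := by
  have hsplit : ∀ i j, B i j =
      ((if i < j then B i j else 0) + if j < i then B j i else 0) + if i = j then B i j else 0 := by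
    intro i j
    rcases lt_trichotomy i j with h | rfl | h
    · simp [h, h.ne, h.not_gt]
    · simp
    · simp [h, h.ne', h.not_gt, hB i j]
  simp only [sum_congr rfl fun i _ => sum_congr rfl fun j _ => hsplit i j, sum_add_distrib,
    sum_ite_eq, mem_univ, if_true]
  rw [sum_comm (f := fun i j => if j < i then B j i else 0), two_nsmul]
  abel

theorem pairSum_eq_sumWordsUpTo (t : ℕ) :
    pairSum t = sumWordsUpTo t fun σ => sumWordsUpTo t fun τ => (dW t σ τ : ℝ) := by
  rw [sumWordsUpTo_sumWordsUpTo, pairSum]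

theorem lambdaT_eq_sumWordsUpTo (t : ℕ) :
    lambdaT t = sumWordsUpTo t fun σ => (dW t σ [] : ℝ) := by
  rw [sumWordsUpTo, Nat.range_succ_eq_Icc_zero, Icc_eq_cons_Ioc (Nat.zero_le _), sum_cons,
    ← Icc_add_one_left_eq_Ioc]
  simp [lambdaT, dW_self]

noncomputable def branchPairSum (t : ℕ) (i j : Letter) : ℝ :=
  sumWordsUpTo t fun σ => sumWordsUpTo t fun τ => (dW (t + 1) (i :: σ) (j :: τ) : ℝ)

theorem branchPairSum_comm (t : ℕ) (i j : Letter) : branchPairSum t i j = branchPairSum t j i := by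
  simp only [branchPairSum, dW_comm _ (i :: _)]
  exact sumWordsUpTo_comm _

theorem branchPairSum_self (t : ℕ) (i : Letter) : branchPairSum t i i = pairSum t := by
  simp only [branchPairSum, dW_succ_cons, pairSum_eq_sumWordsUpTo]

theorem muT_succ_eq_sum_branchPairSum (t : ℕ) :
    muT (t + 1) = (∑ i, branchPairSum t i i) / 2 := by
  simp only [branchPairSum, sumWordsUpTo_sumWordsUpTo]
  rfl

theorem nuT_succ_eq_sum_branchPairSum (t : ℕ) :
    nuT (t + 1) = ∑ i, ∑ j, if i < j then branchPairSum t i j else 0 := by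
  simp only [branchPairSum, sumWordsUpTo_sumWordsUpTo]
  rfl

theorem lambdaT_succ_eq_sum (t : ℕ) :
    lambdaT (t + 1) = ∑ i, sumWordsUpTo t fun σ => (dW (t + 1) (i :: σ) [] : ℝ) := by
  simp [lambdaT_eq_sumWordsUpTo, sumWordsUpTo_succ, dW_self]

theorem pairSum_succ_eq_sum_branchPairSum (t : ℕ) :
    pairSum (t + 1) = 2 * lambdaT (t + 1) + ∑ i, ∑ j, branchPairSum t i j := by
  simp only [pairSum_eq_sumWordsUpTo, sumWordsUpTo_succ, sumWordsUpTo_add, sumWordsUpTo_sum,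
    sum_add_distrib, lambdaT_succ_eq_sum, branchPairSum]
  simp only [dW_self, dW_comm _ [], Nat.cast_zero, zero_add]
  ring

theorem muT_succ_eq_three_mul_piT (t : ℕ) : muT (t + 1) = 3 * piT t := by
  simp only [muT_succ_eq_sum_branchPairSum, branchPairSum_self, sum_const, card_univ,
    Fintype.card_fin, piT]
  ring

theorem pairSum_succ_eq_two_mul_add (t : ℕ) :
    pairSum (t + 1) = 2 * muT (t + 1) + 2 * lambdaT (t + 1) + 2 * nuT (t + 1) := by
  rw [pairSum_succ_eq_sum_branchPairSum,
    Finset.sum_sum_eq_sum_diag_add_two_nsmul _ (branchPairSum_comm t),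
    muT_succ_eq_sum_branchPairSum, nuT_succ_eq_sum_branchPairSum, two_nsmul]
  ring

/-- For every `t ≥ 1`, `μ_t = 3π_{t−1}`, and consequently
`π_t = 3π_{t−1} + λ_t + ν_t`. -/
theorem mu_eq_three_pi (t : ℕ) (ht : 1 ≤ t) :
    muT t = 3 * piT (t - 1) ∧
    piT t = 3 * piT (t - 1) + lambdaT t + nuT t := by
  obtain ⟨t, rfl⟩ := Nat.exists_eq_add_of_le' ht
  rw [Nat.add_sub_cancel, ← muT_succ_eq_three_mul_piT]
  exact ⟨rfl, by rw [piT, pairSum_succ_eq_two_mul_add]; ring⟩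
end

section
/- For every t ≥ 1, the quantity ν_t satisfies 6·κ_{t−1}·(#V_{t−1})² ≤ ν_t ≤ 3·(#V_{t−1})² + 6·(#V_{t−1})²·(κ_{t−1} + 1). -/
open Filter Finset

/-!
Let `ω(σ)` be the number of times the longest suffix using at most two letters must be
stripped from `σ` to reach `∅`. Appending a word with at most two letters raises `ω` by at
most one and `ω` is monotone under prefixes, so `ω` changes by at most one along an edge of
`G_t`; stripping suffixes one at a time is a walk from `σ` to `∅` of length `ω(σ)`. Hence
`d_t(σ, ∅) = ω(σ)` and `L(σ) = ω(σ) - 1`.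

For `i ≠ j`, the walk `iσ' → i → j → jτ'` gives `d_t(iσ', jτ') ≤ L(σ') + L(τ') + 3`. Any walk
from `iσ'` to `jτ'` uses an edge between two words with different first letters; both ends of
such an edge use at most two letters, so have `ω ≤ 1`, which gives
`d_t(iσ', jτ') > L(σ') + L(τ')`. Summing over the three pairs `i < j` and all `σ'`, `τ'`, with
`Σ_{σ ∈ V_{t-1}} L(σ) = κ_{t-1} · #V_{t-1}`, yields both bounds.
-/

def lastBlock (σ : Word) : Word := σ.drop (σ.length - suffLen σ)

theorem suffLen_le_length (σ : Word) : suffLen σ ≤ σ.length := Nat.findGreatest_le _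

theorem le_suffLen {σ : Word} {m : ℕ} (hm : m ≤ σ.length)
    (h : (σ.drop (σ.length - m)).toFinset.card ≤ 2) : m ≤ suffLen σ :=
  Nat.le_findGreatest hm h

theorem card_toFinset_lastBlock_le (σ : Word) : (lastBlock σ).toFinset.card ≤ 2 :=
  Nat.findGreatest_spec (P := fun m => (σ.drop (σ.length - m)).toFinset.card ≤ 2)
    (Nat.zero_le _) (by simp)

theorem one_le_suffLen {σ : Word} (h : σ ≠ []) : 1 ≤ suffLen σ :=
  le_suffLen (List.length_pos_iff.2 h)
    ((List.toFinset_card_le _).trans (by rw [List.length_drop]; omega))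

theorem suffLen_lt_length {σ : Word} (h : 2 < σ.toFinset.card) : suffLen σ < σ.length := by
  refine (suffLen_le_length σ).lt_of_ne fun heq => ?_
  have := card_toFinset_lastBlock_le σ
  rw [lastBlock, heq, Nat.sub_self, List.drop_zero] at this
  omega

theorem fW_append_lastBlock (σ : Word) : fW σ ++ lastBlock σ = σ := List.take_append_drop _ _

theorem fW_isPrefix (σ : Word) : fW σ <+: σ := List.take_prefix _ _

theorem length_fW (σ : Word) : (fW σ).length = σ.length - suffLen σ := by
  rw [fW, List.length_take]
  omega

theorem length_fW_lt {σ : Word} (h : σ ≠ []) : (fW σ).length < σ.length := by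
  have := one_le_suffLen h
  have := List.length_pos_iff.2 h
  rw [length_fW]
  omega

theorem fW_isPrefix_of_append {β s : Word} (hs : s.toFinset.card ≤ 2) : fW (β ++ s) <+: β := by
  have hsuff : s.length ≤ suffLen (β ++ s) :=
    le_suffLen (by simp) (by simpa using hs)
  refine List.prefix_of_prefix_length_le (fW_isPrefix _) (β.prefix_append s) ?_
  rw [length_fW, List.length_append]
  omega

theorem iterate_fW_eq_nil {σ : Word} {n : ℕ} (h : σ.length ≤ n) : fW^[n] σ = [] := by
  induction n generalizing σ with
  | zero => exact List.length_eq_zero_iff.1 (Nat.le_zero.1 h)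
  | succ n ih =>
    rw [Function.iterate_succ_apply]
    rcases eq_or_ne σ [] with rfl | hσ
    · exact ih ((fW_isPrefix []).length_le.trans (by simp))
    · exact ih (by have := length_fW_lt hσ; omega)

theorem iterate_fW_omegaW (σ : Word) : fW^[omegaW σ] σ = [] :=
  Nat.sInf_mem (s := {n | fW^[n] σ = []}) ⟨σ.length, iterate_fW_eq_nil le_rfl⟩

@[simp]
theorem omegaW_nil : omegaW [] = 0 :=
  Nat.sInf_eq_zero.2 (Or.inl rfl)

theorem omegaW_eq_succ {σ : Word} (h : σ ≠ []) : omegaW σ = omegaW (fW σ) + 1 := by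
  refine le_antisymm (Nat.sInf_le ?_) ?_
  · change fW^[omegaW (fW σ) + 1] σ = []
    rw [Function.iterate_succ_apply]
    exact iterate_fW_omegaW (fW σ)
  · obtain ⟨m, hm⟩ : ∃ m, omegaW σ = m + 1 :=
      Nat.exists_eq_succ_of_ne_zero fun h0 => h (by simpa [h0] using iterate_fW_omegaW σ)
    have hmem := iterate_fW_omegaW σ
    rw [hm, Function.iterate_succ_apply] at hmem
    rw [hm]
    exact Nat.succ_le_succ (Nat.sInf_le hmem)

theorem one_le_omegaW {σ : Word} (h : σ ≠ []) : 1 ≤ omegaW σ := by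
  rw [omegaW_eq_succ h]
  omega

theorem omegaW_mono_of_isPrefix {σ π : Word} (hπ : π <+: σ) : omegaW π ≤ omegaW σ := by
  rcases eq_or_ne σ [] with rfl | hσ
  · rw [List.prefix_nil.1 hπ]
  have hlt := length_fW_lt hσ
  rw [omegaW_eq_succ hσ]
  by_cases hle : π.length ≤ (fW σ).length
  · have := omegaW_mono_of_isPrefix (List.prefix_of_prefix_length_le hπ (fW_isPrefix σ) hle)
    omega
  -- `π` is `fW σ` followed by a piece of `lastBlock σ`, so `fW π` is a prefix of `fW σ`.
  obtain ⟨u, rfl⟩ := List.prefix_of_prefix_length_le (fW_isPrefix σ) hπ (by omega)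
  have hne : fW σ ++ u ≠ [] := by rintro h; simp [h] at hle
  have hu : u.toFinset.card ≤ 2 := by
    have hpre : fW σ ++ u <+: fW σ ++ lastBlock σ := by rwa [fW_append_lastBlock]
    rw [List.prefix_append_right_inj] at hpre
    exact (Finset.card_le_card fun a => by simpa using fun ha => hpre.subset ha).trans
      (card_toFinset_lastBlock_le σ)
  have := omegaW_mono_of_isPrefix (fW_isPrefix_of_append (β := fW σ) hu)
  rw [omegaW_eq_succ hne]
  omega
termination_by σ.length

theorem omegaW_append_le {β s : Word} (hs : s.toFinset.card ≤ 2) :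
    omegaW (β ++ s) ≤ omegaW β + 1 := by
  rcases eq_or_ne (β ++ s) [] with h | h
  · simp [h]
  rw [omegaW_eq_succ h]
  exact Nat.succ_le_succ (omegaW_mono_of_isPrefix (fW_isPrefix_of_append hs))

theorem omegaW_le_one {σ : Word} (h : σ.toFinset.card ≤ 2) : omegaW σ ≤ 1 := by
  simpa using omegaW_append_le (β := []) h

theorem omegaW_le_omegaW_cons (i : Letter) (x : Word) : omegaW x ≤ omegaW (i :: x) := by
  by_cases hx : x.toFinset.card ≤ 2
  · exact (omegaW_le_one hx).trans (one_le_omegaW (List.cons_ne_nil i x))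
  -- `i :: x` uses three letters, so its last block is a proper suffix of `x`
  push Not at hx
  have hlt : suffLen (i :: x) < (i :: x).length :=
    suffLen_lt_length (hx.trans_le (Finset.card_le_card (by intro a; simp +contextual)))
  obtain ⟨m, hm⟩ : ∃ m, (i :: x).length - suffLen (i :: x) = m + 1 :=
    ⟨(i :: x).length - suffLen (i :: x) - 1, by omega⟩
  have hfW : fW (i :: x) = i :: x.take m := by rw [fW, hm, List.take_succ_cons]
  have hblock : x.drop m = lastBlock (i :: x) := by rw [lastBlock, hm, List.drop_succ_cons]
  have hrec := omegaW_le_omegaW_cons i (x.take m)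
  have happ := omegaW_append_le (β := x.take m) (hblock ▸ card_toFinset_lastBlock_le _)
  rw [List.take_append_drop] at happ
  rw [omegaW_eq_succ (List.cons_ne_nil i x), hfW]
  omega
termination_by x.length
decreasing_by
  have := one_le_suffLen (List.cons_ne_nil i x)
  simp only [List.length_cons] at hm
  simp only [List.length_take]
  omega

theorem card_toFinset_cons_replicate_le (i j : Letter) (k : ℕ) :
    (i :: List.replicate k j).toFinset.card ≤ 2 :=
  (Finset.card_le_card (s := _) (t := {i, j}) (fun a => by
    simp +contextual [List.mem_replicate, or_imp])).trans Finset.card_le_two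

namespace Gt

variable {t : ℕ}

theorem adj_append {β s : Word} (hs : s ≠ []) (hcard : s.toFinset.card ≤ 2)
    (hlen : (β ++ s).length ≤ t) : (Gt t).Adj (β ++ s) β := by
  refine ⟨hlen, le_trans (by simp) hlen, fun h => hs ?_, β, s, [], rfl, by simp,
    Or.inr (Or.inl ⟨rfl, hcard⟩)⟩
  simpa using h

theorem adj_singleton (ht : 1 ≤ t) {i j : Letter} (hij : i ≠ j) : (Gt t).Adj [i] [j] :=
  ⟨ht, ht, by simpa using hij, [], [i], [j], rfl, rfl,
    Or.inr (Or.inr ⟨i, j, 0, 0, hij, rfl, rfl⟩)⟩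

theorem exists_eq_append_of_adj {σ τ : Word} (h : (Gt t).Adj σ τ) :
    ∃ β σ' τ' : Word, σ = β ++ σ' ∧ τ = β ++ τ' ∧
      σ'.toFinset.card ≤ 2 ∧ τ'.toFinset.card ≤ 2 := by
  obtain ⟨-, -, -, β, σ', τ', rfl, rfl, hcase⟩ := h
  refine ⟨β, σ', τ', rfl, rfl, ?_⟩
  rcases hcase with ⟨rfl, h⟩ | ⟨rfl, h⟩ | ⟨i, j, k, k', -, rfl, rfl⟩
  · simpa using h
  · simpa using h
  · exact ⟨card_toFinset_cons_replicate_le i j k, card_toFinset_cons_replicate_le j i k'⟩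

theorem omegaW_le_of_adj {σ τ : Word} (h : (Gt t).Adj σ τ) : omegaW τ ≤ omegaW σ + 1 := by
  obtain ⟨β, σ', τ', rfl, rfl, -, hτ'⟩ := exists_eq_append_of_adj h
  exact (omegaW_append_le hτ').trans (Nat.succ_le_succ (omegaW_mono_of_isPrefix (β.prefix_append σ')))

theorem card_le_two_of_adj_of_head?_ne {σ τ : Word} (h : (Gt t).Adj σ τ)
    (hhead : σ.head? ≠ τ.head?) : σ.toFinset.card ≤ 2 ∧ τ.toFinset.card ≤ 2 := by
  obtain ⟨β, σ', τ', rfl, rfl, hσ', hτ'⟩ := exists_eq_append_of_adj h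
  cases β with
  | nil => exact ⟨hσ', hτ'⟩
  | cons b β => simp at hhead

theorem omegaW_le_add_length {u v : Word} (p : (Gt t).Walk u v) :
    omegaW v ≤ omegaW u + p.length := by
  induction p with
  | nil => simp
  | cons h q ih =>
    have := omegaW_le_of_adj h
    rw [SimpleGraph.Walk.length_cons]
    omega

theorem omegaW_add_omegaW_le_length_add_one {u v : Word} (p : (Gt t).Walk u v)
    (hhead : u.head? ≠ v.head?) : omegaW u + omegaW v ≤ p.length + 1 := by
  induction p with
  | nil => exact absurd rfl hhead
  | @cons a b c h q ih =>
    rw [SimpleGraph.Walk.length_cons]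
    by_cases hb : a.head? = b.head?
    · have := ih (hb ▸ hhead)
      have := omegaW_le_of_adj h.symm
      omega
    · obtain ⟨ha, hb⟩ := card_le_two_of_adj_of_head?_ne h hb
      have := omegaW_le_one ha
      have := omegaW_le_one hb
      have := omegaW_le_add_length q
      omega

theorem exists_walk_append_length_eq_omegaW (β x : Word) (hlen : (β ++ x).length ≤ t) :
    ∃ p : (Gt t).Walk (β ++ x) β, p.length = omegaW x := by
  rcases eq_or_ne x [] with rfl | hx
  · exact ⟨SimpleGraph.Walk.nil.copy (List.append_nil β).symm rfl, by simp⟩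
  have hlt := length_fW_lt hx
  obtain ⟨p, hp⟩ := exists_walk_append_length_eq_omegaW β (fW x)
    (by simp only [List.length_append] at hlen ⊢; omega)
  have hadj : (Gt t).Adj (β ++ x) (β ++ fW x) := by
    have hblock : lastBlock x ≠ [] := fun h => by
      have := congrArg List.length (fW_append_lastBlock x)
      simp [h] at this
      omega
    simpa [fW_append_lastBlock] using
      adj_append (β := β ++ fW x) hblock (card_toFinset_lastBlock_le x)
        (by simpa [fW_append_lastBlock] using hlen)
  exact ⟨.cons hadj p, by rw [SimpleGraph.Walk.length_cons, hp, omegaW_eq_succ hx]⟩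
termination_by x.length

theorem dW_nil {σ : Word} (h : σ.length ≤ t) : dW t σ [] = omegaW σ := by
  obtain ⟨p, hp⟩ := exists_walk_append_length_eq_omegaW [] σ h
  refine le_antisymm (hp ▸ SimpleGraph.dist_le p) ?_
  obtain ⟨q, hq⟩ := p.reachable.exists_walk_length_eq_dist
  simpa [dW, hq] using omegaW_le_add_length q.reverse

end Gt

theorem Lw_eq_omegaW_sub_one {σ : Word} (h : σ ≠ []) : Lw σ = omegaW σ - 1 := by
  rw [Lw, if_neg h, Gt.dW_nil le_rfl]

theorem omegaW_le_Lw_add_one (σ : Word) : omegaW σ ≤ Lw σ + 1 := by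
  rcases eq_or_ne σ [] with rfl | h
  · simp
  · rw [Lw_eq_omegaW_sub_one h]
    omega

theorem Lw_lt_omegaW_cons (i : Letter) (x : Word) : Lw x < omegaW (i :: x) := by
  rcases eq_or_ne x [] with rfl | hx
  · rw [Lw, if_pos rfl]
    exact one_le_omegaW (List.cons_ne_nil i [])
  · have := omegaW_le_omegaW_cons i x
    have := one_le_omegaW hx
    rw [Lw_eq_omegaW_sub_one hx]
    omega

section CrossPairs

variable {t : ℕ} {i j : Letter} {x y : Word}

theorem exists_walk_cons_cons (hij : i ≠ j) (hx : x.length < t) (hy : y.length < t) :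
    ∃ p : (Gt t).Walk (i :: x) (j :: y), p.length = omegaW x + omegaW y + 1 := by
  obtain ⟨p, hp⟩ := Gt.exists_walk_append_length_eq_omegaW [i] x (by simpa using hx)
  obtain ⟨q, hq⟩ := Gt.exists_walk_append_length_eq_omegaW [j] y (by simpa using hy)
  refine ⟨p.append (.cons (Gt.adj_singleton (by omega) hij) q.reverse), ?_⟩
  simp only [SimpleGraph.Walk.length_append, SimpleGraph.Walk.length_cons,
    SimpleGraph.Walk.length_reverse, hp, hq]
  omega

theorem Lw_add_Lw_lt_dW_cons_cons (hij : i ≠ j) (hx : x.length < t) (hy : y.length < t) :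
    Lw x + Lw y < dW t (i :: x) (j :: y) := by
  obtain ⟨p, -⟩ := exists_walk_cons_cons hij hx hy
  obtain ⟨q, hq⟩ := p.reachable.exists_walk_length_eq_dist
  have := Gt.omegaW_add_omegaW_le_length_add_one q (by simpa using hij)
  have := Lw_lt_omegaW_cons i x
  have := Lw_lt_omegaW_cons j y
  rw [dW, ← hq]
  omega

theorem dW_cons_cons_le (hij : i ≠ j) (hx : x.length < t) (hy : y.length < t) :
    dW t (i :: x) (j :: y) ≤ Lw x + Lw y + 3 := by
  obtain ⟨p, hp⟩ := exists_walk_cons_cons hij hx hy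
  have := SimpleGraph.dist_le p
  have := omegaW_le_Lw_add_one x
  have := omegaW_le_Lw_add_one y
  rw [dW]
  omega

end CrossPairs

def sumWords (t : ℕ) (F : Word → ℝ) : ℝ :=
  ∑ k ∈ range t, ∑ v : Fin k → Letter, F (List.ofFn v)

noncomputable def crossSum (t : ℕ) (i j : Letter) : ℝ :=
  ∑ k ∈ range t, ∑ l ∈ range t, ∑ v : Fin k → Letter, ∑ w : Fin l → Letter,
    (dW t (i :: List.ofFn v) (j :: List.ofFn w) : ℝ)

theorem sumWords_one (t : ℕ) : sumWords (t + 1) (fun _ => 1) = Nv t := by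
  simp only [sumWords, Finset.sum_const, Finset.card_univ, Fintype.card_fun, Fintype.card_fin,
    nsmul_eq_mul, mul_one, Nat.cast_pow, Nat.cast_ofNat]
  rw [geom_sum_eq (by norm_num) (t + 1), Nv]
  ring

theorem sumWords_add_const (t : ℕ) (F : Word → ℝ) (c : ℝ) :
    sumWords t (fun σ => F σ + c) = sumWords t F + c * sumWords t (fun _ => 1) := by
  simp only [sumWords, Finset.sum_add_distrib, Finset.mul_sum, mul_one]

theorem sum_pairs_add (t : ℕ) (F G : Word → ℝ) :
    ∑ k ∈ range t, ∑ l ∈ range t, ∑ v : Fin k → Letter, ∑ w : Fin l → Letter,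
        (F (List.ofFn v) + G (List.ofFn w)) =
      sumWords t F * sumWords t (fun _ => 1) + sumWords t (fun _ => 1) * sumWords t G := by
  simp only [sumWords, Finset.sum_mul_sum, Finset.sum_add_distrib, mul_one, one_mul]

theorem kappa_mul_Nv (t : ℕ) : kappa t * Nv t = sumWords (t + 1) (fun σ => (Lw σ : ℝ)) := by
  have hpos : 0 < Nv t := by
    have := one_lt_pow₀ (by norm_num : (1 : ℝ) < 3) (by omega : t + 1 ≠ 0)
    rw [Nv]
    linarith
  exact div_mul_cancel₀ _ hpos.ne'

section CrossSum

variable {t : ℕ} {i j : Letter}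

local notation "S" => sumWords t (fun σ => (Lw σ : ℝ))
local notation "N" => sumWords t (fun _ => 1)

theorem le_crossSum (hij : i ≠ j) : 2 * S * N ≤ crossSum t i j := by
  have hpt : ∑ k ∈ range t, ∑ l ∈ range t, ∑ v : Fin k → Letter, ∑ w : Fin l → Letter,
      ((Lw (List.ofFn v) : ℝ) + Lw (List.ofFn w)) ≤ crossSum t i j := by
    unfold crossSum
    gcongr with k hk l hl v _ w _
    exact_mod_cast (Lw_add_Lw_lt_dW_cons_cons hij (by simpa using hk) (by simpa using hl)).le
  calc 2 * S * N = S * N + N * S := by ring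
    _ = _ := (sum_pairs_add t _ _).symm
    _ ≤ crossSum t i j := hpt

theorem crossSum_le (hij : i ≠ j) : crossSum t i j ≤ 2 * S * N + 3 * N ^ 2 := by
  have hpt : crossSum t i j ≤ ∑ k ∈ range t, ∑ l ∈ range t, ∑ v : Fin k → Letter,
      ∑ w : Fin l → Letter, (((Lw (List.ofFn v) : ℝ) + 3) + Lw (List.ofFn w)) := by
    unfold crossSum
    gcongr with k hk l hl v _ w _
    rw [add_right_comm]
    exact_mod_cast dW_cons_cons_le hij (by simpa using hk) (by simpa using hl)
  calc crossSum t i j ≤ _ := hpt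
    _ = sumWords t (fun σ => (Lw σ : ℝ) + 3) * N + N * S :=
      sum_pairs_add t (fun σ => (Lw σ : ℝ) + 3) (fun σ => (Lw σ : ℝ))
    _ = 2 * S * N + 3 * N ^ 2 := by rw [sumWords_add_const]; ring

end CrossSum

theorem sum_ite_lt_const (c : ℝ) :
    ∑ i : Letter, ∑ j : Letter, (if i < j then c else 0) = 3 * c := by
  simp [Fin.sum_univ_succ]
  ring

theorem nuT_eq (t : ℕ) :
    nuT t = ∑ i : Letter, ∑ j : Letter, if i < j then crossSum t i j else 0 := rfl

theorem le_nuT {t : ℕ} {a : ℝ} (h : ∀ i j : Letter, i ≠ j → a ≤ crossSum t i j) :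
    3 * a ≤ nuT t := by
  rw [← sum_ite_lt_const, nuT_eq]
  gcongr with i _ j _
  split_ifs with hij
  exacts [h i j hij.ne, le_rfl]

theorem nuT_le {t : ℕ} {b : ℝ} (h : ∀ i j : Letter, i ≠ j → crossSum t i j ≤ b) :
    nuT t ≤ 3 * b := by
  rw [← sum_ite_lt_const, nuT_eq]
  gcongr with i _ j _
  split_ifs with hij
  exacts [h i j hij.ne, le_rfl]

/-- For every `t ≥ 1`,
`6·κ_{t−1}·(#V_{t−1})² ≤ ν_t ≤ 3·(#V_{t−1})² + 6·(#V_{t−1})²·(κ_{t−1} + 1)`. -/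
theorem nu_bounds (t : ℕ) (ht : 1 ≤ t) :
    6 * kappa (t - 1) * (Nv (t - 1)) ^ 2 ≤ nuT t ∧
    nuT t ≤ 3 * (Nv (t - 1)) ^ 2 + 6 * (Nv (t - 1)) ^ 2 * (kappa (t - 1) + 1) := by
  obtain ⟨s, rfl⟩ := Nat.exists_eq_add_of_le' ht
  rw [Nat.add_sub_cancel]
  have hS := kappa_mul_Nv s
  have hN := sumWords_one s
  constructor
  · calc 6 * kappa s * Nv s ^ 2 = 3 * (2 * (kappa s * Nv s) * Nv s) := by ring
      _ ≤ nuT (s + 1) := by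
        rw [hS, ← hN]
        exact le_nuT fun i j => le_crossSum
  · calc nuT (s + 1) ≤ 3 * (2 * (kappa s * Nv s) * Nv s + 3 * Nv s ^ 2) := by
          rw [hS, ← hN]
          exact nuT_le fun i j => crossSum_le
      _ = 3 * Nv s ^ 2 + 6 * Nv s ^ 2 * (kappa s + 1) := by ring
end

section
/- For l ≥ 3 and integers k₁ ≥ 1, k₂,…,k_l ≥ 2: W_{k₁⋯k_l} = (2^{k₁} − 1) · [∏_{i=2}^{l−1} 2(2^{k_i − 1} − 1)] · 3(2^{k_l} − 2). For l = 2: W_{k₁k₂} = (2^{k₁} − 1) · 3(2^{k₂} − 2). For l = 1: W_{k₁} = 3·2^{k₁} − 3. -/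
open Filter Finset

/-! A word with a normal decomposition into blocks of prescribed lengths determines its blocks,
so `W` counts lists of blocks. Given the blocks up to `τᵢ`, the condition on `τᵢ₊₁` says exactly
that it uses precisely the two letters other than the last letter of `τᵢ`; whatever that letter
is, there are `2^k - 2` such words of length `k`. Hence
`W_{k₁⋯k_l} = (3·2^{k₁} - 3)·∏_{i ≥ 2} (2^{kᵢ} - 2)`, where `3·2^{k₁} - 3` counts the words of
length `k₁` with at most two distinct letters. -/

theorem List.eq_replicate_of_toFinset_eq_singleton {α : Type*} [DecidableEq α] {w : List α}
    {a : α} (h : w.toFinset = {a}) : w = replicate w.length a :=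
  eq_replicate_iff.mpr ⟨rfl, fun b hb => by simpa [h] using mem_toFinset.mpr hb⟩

theorem List.eq_of_flatten_eq_of_map_length_eq {α : Type*} :
    ∀ {τs τs' : List (List α)}, τs.map length = τs'.map length → τs.flatten = τs'.flatten →
      τs = τs'
  | [], [], _, _ => rfl
  | τ :: τs, τ' :: τs', hlen, hflat => by
    simp only [map_cons, cons.injEq, flatten_cons] at hlen hflat ⊢
    obtain ⟨rfl, hrest⟩ := append_inj hflat hlen.1
    exact ⟨rfl, eq_of_flatten_eq_of_map_length_eq hlen.2 hrest⟩

theorem List.forall_get_cons_iff {α : Type*} {a : α} {l : List α} {P Q : α → Prop} :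
    (∀ i : Fin (a :: l).length,
        (i.1 = 0 → P ((a :: l).get i)) ∧ (1 ≤ i.1 → Q ((a :: l).get i))) ↔
      P a ∧ ∀ x ∈ l, Q x := by
  rw [forall_mem_iff_get]
  exact Fin.forall_fin_succ.trans (by simp)

section Alphabet

variable {α : Type*} [DecidableEq α] [Fintype α]

theorem Finset.eq_compl_singleton_iff {s : Finset α} {c : α} :
    s = {c}ᶜ ↔ c ∉ s ∧ ∀ c', c' ∉ s → c' = c := by
  simp only [Finset.ext_iff, mem_compl, mem_singleton]
  grind

theorem Finset.exists_eq_compl_singleton_of_card_add_one {s : Finset α}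
    (h : #s + 1 = Fintype.card α) : ∃ c, s = {c}ᶜ := by
  obtain ⟨c, hc⟩ := card_eq_one.mp (by rw [card_compl]; omega : #sᶜ = 1)
  exact ⟨c, by rw [← hc, compl_compl]⟩

end Alphabet

section Words

variable {α : Type*} [DecidableEq α]

def wordsOver (S : Finset α) : ℕ → Finset (List α)
  | 0 => {[]}
  | k + 1 => (S ×ˢ wordsOver S k).image fun p => p.1 :: p.2

theorem mem_wordsOver {S : Finset α} {k : ℕ} {w : List α} :
    w ∈ wordsOver S k ↔ w.length = k ∧ w.toFinset ⊆ S := by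
  induction k generalizing w with
  | zero => simp +contextual [wordsOver]
  | succ k ih => cases w <;> simp [wordsOver, ih, insert_subset_iff, and_left_comm]

theorem card_wordsOver (S : Finset α) (k : ℕ) : #(wordsOver S k) = #S ^ k := by
  induction k with
  | zero => rfl
  | succ k ih =>
    rw [wordsOver, card_image_of_injective _ fun p q h => by simpa [Prod.ext_iff] using h,
      card_product, ih, pow_succ']

theorem card_filter_toFinset_eq_of_card_eq_two [Fintype α] {S : Finset α} (hS : #S = 2)
    (k : ℕ) : #{w ∈ wordsOver univ k | w.toFinset = S} = 2 ^ k - 2 := by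
  rcases Nat.eq_zero_or_pos k with rfl | hk
  · rw [wordsOver, filter_singleton, if_neg fun h => by simp [← h] at hS]
    rfl
  have hconst : S.image (List.replicate k) ⊆ wordsOver S k := by
    simp [image_subset_iff, mem_wordsOver, List.toFinset_replicate_of_ne_zero hk.ne']
  have hexact : {w ∈ wordsOver (univ : Finset α) k | w.toFinset = S} =
      wordsOver S k \ S.image (List.replicate k) := by
    ext w
    simp only [mem_filter, mem_wordsOver, Finset.mem_sdiff, mem_image, subset_univ, and_true,
      not_exists, not_and]
    constructor
    · rintro ⟨rfl, rfl⟩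
      refine ⟨⟨rfl, subset_rfl⟩, fun a _ h => ?_⟩
      rw [← h, List.toFinset_replicate_of_ne_zero hk.ne', card_singleton] at hS
      omega
    · rintro ⟨⟨rfl, hsub⟩, hnot⟩
      refine ⟨rfl, of_not_not fun hne => ?_⟩
      have hpos : 0 < #w.toFinset :=
        card_pos.mpr ((List.toFinset_nonempty_iff _).mpr (List.length_pos_iff.mp hk))
      obtain ⟨a, ha⟩ := card_eq_one.mp
        (by have := card_lt_card (hsub.ssubset_of_ne hne); omega : #w.toFinset = 1)
      exact hnot a (hsub (by simp [ha])) (List.eq_replicate_of_toFinset_eq_singleton ha).symm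
  rw [hexact, card_sdiff_of_subset hconst, card_wordsOver, hS,
    card_image_of_injective _ (List.replicate_right_injective hk.ne'), hS]

variable [Fintype α]

def blockLists : List ℕ → Finset (List (List α))
  | [] => {[]}
  | k :: ks => (wordsOver univ k ×ˢ blockLists ks).image fun p => p.1 :: p.2

theorem mem_blockLists {ks : List ℕ} {τs : List (List α)} :
    τs ∈ blockLists ks ↔ τs.map List.length = ks := by
  induction ks generalizing τs with
  | nil => cases τs <;> simp [blockLists]
  | cons k ks ih => cases τs <;> simp [blockLists, mem_wordsOver, ih]

theorem card_filter_blockLists_cons (k : ℕ) (ks : List ℕ) (p : List (List α) → Prop)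
    [DecidablePred p] :
    #{τs ∈ blockLists (k :: ks) | p τs} =
      ∑ τ ∈ wordsOver univ k, #{τs ∈ blockLists ks | p (τ :: τs)} := by
  rw [blockLists, filter_image,
    card_image_of_injective _ fun a b h => by simpa [Prod.ext_iff] using h, card_filter,
    sum_product]
  simp only [card_filter]

end Words

theorem card_filter_toFinset_card_le_two {k : ℕ} (hk : k ≠ 0) :
    #{w ∈ wordsOver (univ : Finset Letter) k | #w.toFinset ≤ 2} = 3 * 2 ^ k - 3 := by
  have hsplit : {w ∈ wordsOver (univ : Finset Letter) k | #w.toFinset ≤ 2} =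
      univ.image (List.replicate k) ∪
        univ.biUnion fun c => {w ∈ wordsOver univ k | w.toFinset = {c}ᶜ} := by
    ext w
    simp only [mem_filter, mem_wordsOver, subset_univ, and_true, mem_union, mem_image, mem_univ,
      true_and, mem_biUnion]
    constructor
    · rintro ⟨rfl, hw⟩
      have hpos : 0 < #w.toFinset :=
        card_pos.mpr ((List.toFinset_nonempty_iff _).mpr fun h => hk (by simp [h]))
      rcases (by rw [Fintype.card_fin]; omega :
          #w.toFinset = 1 ∨ #w.toFinset + 1 = Fintype.card Letter) with h1 | h2
      · obtain ⟨a, ha⟩ := card_eq_one.mp h1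
        exact .inl ⟨a, (List.eq_replicate_of_toFinset_eq_singleton ha).symm⟩
      · obtain ⟨c, hc⟩ := exists_eq_compl_singleton_of_card_add_one h2
        exact .inr ⟨c, rfl, hc⟩
    · rintro (⟨a, rfl⟩ | ⟨c, rfl, hc⟩)
      · simp [List.toFinset_replicate_of_ne_zero hk]
      · simp [hc, card_compl]
  have hdisj : Disjoint (univ.image (List.replicate k))
      (univ.biUnion fun c : Letter => {w ∈ wordsOver univ k | w.toFinset = {c}ᶜ}) := by
    simp only [disjoint_left, mem_image, mem_biUnion, mem_filter, mem_univ, true_and]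
    rintro _ ⟨a, rfl⟩ ⟨c, -, h⟩
    have := congrArg card h
    rw [List.toFinset_replicate_of_ne_zero hk, card_singleton, card_compl] at this
    simp at this
  have hcompl : ((univ : Finset Letter) : Set Letter).PairwiseDisjoint fun c =>
      {w ∈ wordsOver (univ : Finset Letter) k | w.toFinset = {c}ᶜ} := by
    intro c _ c' _ hne
    simp only [Function.onFun, disjoint_left, mem_filter]
    rintro w ⟨-, h⟩ ⟨-, h'⟩
    exact hne (by simpa using h.symm.trans h')
  have h2k : 2 ≤ 2 ^ k := Nat.le_self_pow hk 2
  have hpair (c : Letter) : #({c}ᶜ : Finset Letter) = 2 := by simp [card_compl]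
  rw [hsplit, card_union_of_disjoint hdisj, card_biUnion hcompl,
    card_image_of_injective _ (List.replicate_right_injective hk)]
  simp only [card_filter_toFinset_eq_of_card_eq_two (hpair _), sum_const, card_univ,
    Fintype.card_fin, smul_eq_mul]
  omega

def IsNextBlock (τ τ' : Word) : Prop := ∃ c, τ.getLast? = some c ∧ τ'.toFinset = {c}ᶜ

instance : DecidableRel IsNextBlock := fun τ τ' =>
  inferInstanceAs (Decidable (∃ c, τ.getLast? = some c ∧ τ'.toFinset = {c}ᶜ))

theorem isNextBlock_iff {τ τ' : Word} {c : Letter} (hc : τ.getLast? = some c) :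
    IsNextBlock τ τ' ↔ τ'.toFinset = {c}ᶜ := by
  simp [IsNextBlock, hc]

theorem card_toFinset_eq_two_of_isChain {τ τ' : Word} {τs : List Word}
    (hchain : List.IsChain IsNextBlock (τ :: τs)) (hτ' : τ' ∈ τs) : #τ'.toFinset = 2 := by
  induction τs generalizing τ with
  | nil => simp at hτ'
  | cons τ₁ τs ih =>
    obtain ⟨⟨c, -, hc⟩, hrest⟩ := List.isChain_cons_cons.mp hchain
    rcases List.mem_cons.mp hτ' with rfl | hτ'
    · simp [hc, card_compl]
    · exact ih hrest hτ'

theorem card_filter_isChain_isNextBlock {τ : Word} (hτ : τ ≠ []) (ks : List ℕ) :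
    #{τs ∈ blockLists ks | List.IsChain IsNextBlock (τ :: τs)} =
      (ks.map fun k => 2 ^ k - 2).prod := by
  induction ks generalizing τ with
  | nil =>
    rw [blockLists, filter_singleton, if_pos (List.isChain_singleton τ), card_singleton]
    rfl
  | cons k ks ih =>
    obtain ⟨c, hc⟩ := Option.isSome_iff_exists.mp (List.getLast?_isSome.mpr hτ)
    have hpair : #({c}ᶜ : Finset Letter) = 2 := by simp [card_compl]
    have hfiber (τ' : Word) :
        #{τs ∈ blockLists ks | List.IsChain IsNextBlock (τ :: τ' :: τs)} =
          if τ'.toFinset = {c}ᶜ then (ks.map fun k => 2 ^ k - 2).prod else 0 := by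
      simp only [List.isChain_cons_cons, isNextBlock_iff hc]
      split_ifs with h
      · have hτ' : τ' ≠ [] := by rintro rfl; simpa [hpair] using congrArg card h
        simpa [h] using ih hτ'
      · simp [h]
    rw [card_filter_blockLists_cons, sum_congr rfl fun τ' _ => hfiber τ', ← sum_filter,
      sum_const, card_filter_toFinset_eq_of_card_eq_two hpair, smul_eq_mul, List.map_cons,
      List.prod_cons]

theorem isNormalDecomp_cons_iff {σ τ : Word} {τs : List Word} (hτ : τ ≠ [])
    (hτs : ∀ τ' ∈ τs, 2 ≤ τ'.length) :
    IsNormalDecomp σ (τ :: τs) ↔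
      σ = (τ :: τs).flatten ∧ #τ.toFinset ≤ 2 ∧ List.IsChain IsNextBlock (τ :: τs) := by
  rw [IsNormalDecomp,
    List.forall_get_cons_iff (P := fun w : Word => 1 ≤ w.length ∧ #w.toFinset ≤ 2)
      (Q := fun w : Word => 2 ≤ w.length ∧ #w.toFinset = 2),
    List.isChain_iff_getElem]
  simp only [← Finset.eq_compl_singleton_iff, List.get_eq_getElem]
  constructor
  · rintro ⟨hσ, -, ⟨⟨-, hcard⟩, -⟩, hnext⟩
    exact ⟨hσ, hcard, hnext⟩
  · rintro ⟨hσ, hcard, hnext⟩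
    refine ⟨hσ, List.cons_ne_nil _ _, ⟨⟨List.length_pos_iff.mpr hτ, hcard⟩,
      fun τ' hτ' => ⟨hτs τ' hτ', ?_⟩⟩, hnext⟩
    exact card_toFinset_eq_two_of_isChain (List.isChain_iff_getElem.mpr hnext) hτ'

open Classical in
theorem Wcount_eq_card_filter_blockLists (ks : List ℕ) :
    Wcount ks = #{τs ∈ (blockLists ks : Finset (List Word)) | IsNormalDecomp τs.flatten τs} := by
  have hinj : Set.InjOn List.flatten
      (({τs ∈ blockLists ks | IsNormalDecomp τs.flatten τs} : Finset (List Word)) :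
        Set (List Word)) := fun τs hτs τs' hτs' => by
    simp only [coe_filter, Set.mem_ofPred_eq, mem_blockLists] at hτs hτs'
    exact List.eq_of_flatten_eq_of_map_length_eq (hτs.1.trans hτs'.1.symm)
  rw [Wcount, ← Set.coe_ofPred, Nat.card_coe_set_eq, ← Set.ncard_coe_finset, ← hinj.ncard_image]
  congr 1
  ext σ
  simp only [Set.mem_ofPred_eq, Set.mem_image, coe_filter, mem_blockLists]
  constructor
  · rintro ⟨τs, hσ, hlen⟩
    exact ⟨τs, ⟨hlen, hσ.1 ▸ hσ⟩, hσ.1.symm⟩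
  · rintro ⟨τs, ⟨hlen, hτs⟩, rfl⟩
    exact ⟨τs, hτs, hlen⟩

theorem Wcount_cons {k₁ : ℕ} (hk₁ : k₁ ≠ 0) {ks : List ℕ} (hks : ∀ k ∈ ks, 2 ≤ k) :
    Wcount (k₁ :: ks) = (3 * 2 ^ k₁ - 3) * (ks.map fun k => 2 ^ k - 2).prod := by
  classical
  rw [Wcount_eq_card_filter_blockLists, card_filter_blockLists_cons,
    ← card_filter_toFinset_card_le_two hk₁, card_eq_sum_ones, sum_mul, sum_filter]
  refine sum_congr rfl fun τ hτ => ?_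
  have hne : τ ≠ [] := by
    rintro rfl
    exact hk₁ (mem_wordsOver.mp hτ).1.symm
  calc #{τs ∈ blockLists ks | IsNormalDecomp (τ :: τs).flatten (τ :: τs)}
      = #{τs ∈ blockLists ks | #τ.toFinset ≤ 2 ∧ List.IsChain IsNextBlock (τ :: τs)} := by
        refine congrArg card (filter_congr fun τs hτs => ?_)
        have hlen := mem_blockLists.mp hτs
        rw [isNormalDecomp_cons_iff hne fun τ' hτ' => hks _ (hlen ▸ List.mem_map_of_mem hτ')]
        simp
    _ = _ := by
        split_ifs with hcard <;> simp [hcard, card_filter_isChain_isNextBlock hne]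

/-- Counting words with a normal decomposition of given block lengths: for `l ≥ 3`
(middle blocks `ms` nonempty), `W_{k₁⋯k_l} = (2^{k₁}−1)·∏_{i=2}^{l−1} 2(2^{k_i−1}−1)·3(2^{k_l}−2)`;
for `l = 2`, `W_{k₁k₂} = (2^{k₁}−1)·3(2^{k₂}−2)`; for `l = 1`, `W_{k₁} = 3·2^{k₁}−3`. -/
theorem Wcount_formula :
    (∀ (k₁ : ℕ) (ms : List ℕ) (kl : ℕ), 1 ≤ k₁ → (∀ m ∈ ms, 2 ≤ m) → 2 ≤ kl → ms ≠ [] →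
      Wcount (k₁ :: (ms ++ [kl])) =
        (2 ^ k₁ - 1) * (ms.map fun m => 2 * (2 ^ (m - 1) - 1)).prod * (3 * (2 ^ kl - 2))) ∧
    (∀ k₁ kl : ℕ, 1 ≤ k₁ → 2 ≤ kl →
      Wcount [k₁, kl] = (2 ^ k₁ - 1) * (3 * (2 ^ kl - 2))) ∧
    (∀ k₁ : ℕ, 1 ≤ k₁ → Wcount [k₁] = 3 * 2 ^ k₁ - 3) := by
  have hfirst (k : ℕ) : 3 * 2 ^ k - 3 = 3 * (2 ^ k - 1) := (Nat.mul_sub_one 3 _).symm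
  have hmiddle (m : ℕ) (hm : 1 ≤ m) : 2 * (2 ^ (m - 1) - 1) = 2 ^ m - 2 := by
    rw [Nat.mul_sub_one, ← pow_succ', Nat.sub_add_cancel hm]
  refine ⟨fun k₁ ms kl hk₁ hms hkl _ => ?_, fun k₁ kl hk₁ hkl => ?_, fun k₁ hk₁ => ?_⟩
  · have hks : ∀ k ∈ ms ++ [kl], 2 ≤ k := by simpa [or_imp, forall_and] using ⟨hms, hkl⟩
    rw [Wcount_cons (by omega) hks, hfirst, List.map_append, List.prod_append,
      List.map_congr_left fun m hm => hmiddle m (by have := hms m hm; omega)]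
    simp only [List.map_cons, List.map_nil, List.prod_cons, List.prod_nil]
    ring
  · rw [Wcount_cons (by omega) (by simpa using hkl), hfirst]
    simp only [List.map_cons, List.map_nil, List.prod_cons, List.prod_nil]
    ring
  · simpa using Wcount_cons (ks := []) (by omega) (by simp)
end

section
/- For l ≥ 2 and integers k₁ ≥ 1, k₂,…,k_l ≥ 2: W_{k₁⋯k_{l−1}k_l} = (2^{k_l} − 2) · W_{k₁⋯k_{l−1}}. -/
open Filter Finset

/-! Cutting off the last block identifies a word with block lengths `k₁⋯k_l` with a pair
`(u, v)`: `u` a word with block lengths `k₁⋯k_{l-1}` and `v` a word of length `k_l` whose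
letters are exactly the two letters other than the last letter of `u`. For each `u` these `v`
are the non-constant words over a two-letter alphabet, and there are `2^{k_l} - 2` of them. -/

open Function

theorem card_surjective_fin_of_card_eq_two {Y : Type*} [Finite Y] (hY : Nat.card Y = 2)
    (k : ℕ) : Nat.card {f : Fin k → Y // Surjective f} = 2 ^ k - 2 := by
  have : Nonempty Y := Nat.card_pos_iff.mp (by omega) |>.1
  set constants := Set.range (const (Fin k) : Y → Fin k → Y)
  have surjective_iff (f : Fin k → Y) : Surjective f ↔ f ∈ constantsᶜ := by
    rw [Set.mem_compl_iff, ← not_iff_not, not_not]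
    constructor
    · intro hf
      obtain ⟨y, hy⟩ := not_forall.mp hf
      obtain ⟨y', -, hy'⟩ := (Nat.card_eq_two_iff' y).mp hY
      exact ⟨y', funext fun i => (hy' (f i) fun h => hy ⟨i, h⟩).symm⟩
    · rintro ⟨y, rfl⟩ hf
      obtain ⟨y', hy', -⟩ := (Nat.card_eq_two_iff' y).mp hY
      exact hy' (hf y').choose_spec.symm
  cases k with
  | zero => simp [Surjective] -- `2 ^ 0 - 2 = 0` by truncated subtraction
  | succ k =>
    have hconst : Nat.card constants = 2 := by
      rw [Nat.card_range_of_injective (const_injective (α := Fin (k + 1)) (β := Y)), hY]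
    have hsplit := Set.ncard_add_ncard_compl constants
    rw [← Nat.card_coe_set_eq, ← Nat.card_coe_set_eq, hconst, Nat.card_fun, hY, Nat.card_fin]
      at hsplit
    rw [Nat.card_congr (Equiv.subtypeEquivRight surjective_iff), ← hsplit,
      Nat.add_sub_cancel_left]

def wordsEquivSurjective {α : Type*} [DecidableEq α] (S : Finset α) (k : ℕ) :
    {v : List α // v.length = k ∧ v.toFinset = S} ≃ {f : Fin k → S // Surjective f} where
  toFun := fun ⟨v, hlen, hS⟩ =>
    ⟨fun i => ⟨v[i.1]'(i.2.trans_eq hlen.symm), by subst hS; simp⟩, by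
      rintro ⟨y, hy⟩
      rw [← hS, List.mem_toFinset, List.mem_iff_getElem] at hy
      obtain ⟨i, hi, rfl⟩ := hy
      exact ⟨⟨i, hi.trans_eq hlen⟩, rfl⟩⟩
  invFun f := ⟨List.ofFn fun i => (f.1 i).1, by simp, by
    ext y
    simp only [List.mem_toFinset, List.mem_ofFn]
    constructor
    · rintro ⟨i, rfl⟩
      exact (f.1 i).2
    · intro hy
      obtain ⟨i, hi⟩ := f.2 ⟨y, hy⟩
      exact ⟨i, by rw [hi]⟩⟩
  left_inv := fun ⟨v, hlen, _⟩ => Subtype.ext <| List.ext_getElem (by simp [hlen]) (by simp)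
  right_inv f := by ext; simp

theorem card_words_toFinset_eq_of_card_eq_two {α : Type*} [DecidableEq α] {S : Finset α}
    (hS : S.card = 2) (k : ℕ) :
    Nat.card {v : List α // v.length = k ∧ v.toFinset = S} = 2 ^ k - 2 := by
  rw [Nat.card_congr (wordsEquivSurjective S k)]
  exact card_surjective_fin_of_card_eq_two (by simpa using hS) k

theorem Finset.eq_univ_erase_iff {α : Type*} [Fintype α] [DecidableEq α] {s : Finset α}
    {c : α} : s = univ.erase c ↔ c ∉ s ∧ ∀ c', c' ∉ s → c' = c := by
  simp only [Finset.ext_iff, Finset.mem_erase, Finset.mem_univ, and_true]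
  exact ⟨fun h => ⟨fun hc => (h c).mp hc rfl,
      fun c' hc' => by_contra fun hne => hc' ((h c').mpr hne)⟩,
    fun ⟨hc, h⟩ a => ⟨fun ha hac => hc (hac ▸ ha), fun hac => by_contra fun ha => hac (h a ha)⟩⟩

def Linked (τ τ' : Word) : Prop := ∃ c ∈ τ.getLast?, τ'.toFinset = univ.erase c

theorem isNormalDecomp_cons_iff_s16 {σ τ₁ : Word} {rest : List Word} :
    IsNormalDecomp σ (τ₁ :: rest) ↔ σ = (τ₁ :: rest).flatten ∧
      (1 ≤ τ₁.length ∧ τ₁.toFinset.card ≤ 2) ∧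
      (∀ τ ∈ rest, 2 ≤ τ.length ∧ τ.toFinset.card = 2) ∧ (τ₁ :: rest).IsChain Linked := by
  have linked_iff (τ τ' : Word) : Linked τ τ' ↔ ∃ c, τ.getLast? = some c ∧ c ∉ τ'.toFinset ∧
      ∀ c', c' ∉ τ'.toFinset → c' = c := by
    simp only [Linked, Option.mem_def, Finset.eq_univ_erase_iff]
  simp [IsNormalDecomp, Fin.forall_fin_succ, List.isChain_iff_getElem, linked_iff,
    List.forall_mem_iff_get, and_assoc]

theorem List.getLast?_flatten_of_mem_getLast? {α : Type*} {L : List (List α)} {x : List α}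
    (hx : x ∈ L.getLast?) (hx' : x ≠ []) : L.flatten.getLast? = x.getLast? := by
  rw [← List.dropLast_append_getLast? x hx, List.flatten_append, List.flatten_singleton,
    List.getLast?_append_of_ne_nil _ hx']

theorem IsNormalDecomp.ne_nil_of_mem {σ τ : Word} {τs : List Word} (h : IsNormalDecomp σ τs)
    (hτ : τ ∈ τs) : τ ≠ [] := by
  obtain ⟨τ₁, rest, rfl⟩ := List.exists_cons_of_ne_nil h.2.1
  obtain ⟨-, h₁, hrest, -⟩ := isNormalDecomp_cons_iff_s16.mp h
  rw [← List.length_pos_iff]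
  rcases List.mem_cons.mp hτ with rfl | hτ
  · exact h₁.1
  · exact Nat.lt_of_lt_of_le two_pos (hrest τ hτ).1

theorem IsNormalDecomp.getLast?_eq {σ τ : Word} {τs : List Word} (h : IsNormalDecomp σ τs)
    (hτ : τ ∈ τs.getLast?) : σ.getLast? = τ.getLast? := by
  rw [h.1, List.getLast?_flatten_of_mem_getLast? hτ (h.ne_nil_of_mem (List.mem_of_getLast? hτ))]

theorem Linked.two_le_length_and_card_eq_two {σ τ : Word} (h : Linked σ τ) :
    2 ≤ τ.length ∧ τ.toFinset.card = 2 := by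
  obtain ⟨c, -, hc⟩ := h
  have hcard : τ.toFinset.card = 2 := by simp [hc]
  exact ⟨hcard ▸ τ.toFinset_card_le, hcard⟩

theorem isNormalDecomp_append_singleton_iff {ρ τ : Word} {τs : List Word} (hτs : τs ≠ []) :
    IsNormalDecomp ρ (τs ++ [τ]) ↔
      IsNormalDecomp τs.flatten τs ∧ ρ = τs.flatten ++ τ ∧ Linked τs.flatten τ := by
  obtain ⟨τ₁, rest, rfl⟩ := List.exists_cons_of_ne_nil hτs
  obtain ⟨x, hx⟩ : ∃ x, x ∈ (τ₁ :: rest).getLast? :=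
    ⟨_, List.getLast?_eq_getLast_of_ne_nil hτs⟩
  have linked_last (h : IsNormalDecomp (τ₁ :: rest).flatten (τ₁ :: rest)) :
      Linked (τ₁ :: rest).flatten τ ↔ Linked x τ := by
    simp only [Linked, h.getLast?_eq hx]
  rw [List.cons_append, isNormalDecomp_cons_iff_s16 (σ := ρ), ← List.cons_append, List.isChain_append]
  simp only [List.forall_mem_append, List.forall_mem_singleton, List.isChain_singleton,
    List.head?_cons, Option.mem_some_iff, forall_eq', List.flatten_append, List.flatten_singleton,
    true_and]
  constructor
  · rintro ⟨hρ, h₁, ⟨hrest, -⟩, hchain, hlink⟩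
    have h := isNormalDecomp_cons_iff_s16.mpr ⟨rfl, h₁, hrest, hchain⟩
    exact ⟨h, hρ, (linked_last h).mpr (hlink x hx)⟩
  · rintro ⟨h, hρ, hlink⟩
    obtain ⟨-, h₁, hrest, hchain⟩ := isNormalDecomp_cons_iff_s16.mp h
    refine ⟨hρ, h₁, ⟨hrest, hlink.two_le_length_and_card_eq_two⟩, hchain, fun y hy => ?_⟩
    rw [Option.mem_unique hy hx]
    exact (linked_last h).mp hlink

def normalWords (ks : List ℕ) : Set Word :=
  {σ | ∃ τs : List Word, IsNormalDecomp σ τs ∧ τs.map List.length = ks}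

def linkedBlocks (u : Word) (k : ℕ) : Set Word := {v | v.length = k ∧ Linked u v}

theorem length_of_mem_normalWords {ks : List ℕ} {σ : Word} (hσ : σ ∈ normalWords ks) :
    σ.length = ks.sum := by
  obtain ⟨τs, h, rfl⟩ := hσ
  rw [h.1, List.length_flatten]

theorem ne_nil_of_mem_normalWords {ks : List ℕ} {σ : Word} (hσ : σ ∈ normalWords ks) :
    σ ≠ [] := by
  obtain ⟨τs, h, -⟩ := hσ
  obtain ⟨τ₁, rest, rfl⟩ := List.exists_cons_of_ne_nil h.2.1
  rw [h.1, List.flatten_cons]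
  exact List.append_ne_nil_of_left_ne_nil (h.ne_nil_of_mem List.mem_cons_self) _

theorem mem_normalWords_append_singleton_iff {ks : List ℕ} (hks : ks ≠ []) {k : ℕ} {σ : Word} :
    σ ∈ normalWords (ks ++ [k]) ↔ ∃ u ∈ normalWords ks, ∃ v ∈ linkedBlocks u k, σ = u ++ v := by
  constructor
  · rintro ⟨τs, h, hlen⟩
    obtain ⟨τs', τl, rfl, rfl, hτl⟩ := List.map_eq_append_iff.mp hlen
    obtain ⟨τ, rfl, rfl⟩ := List.map_eq_singleton_iff.mp hτl
    have hτs' : τs' ≠ [] := by rintro rfl; exact hks rfl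
    obtain ⟨h', rfl, hlink⟩ := (isNormalDecomp_append_singleton_iff hτs').mp h
    exact ⟨_, ⟨τs', h', rfl⟩, τ, ⟨rfl, hlink⟩, rfl⟩
  · rintro ⟨u, ⟨τs, h, rfl⟩, v, ⟨rfl, hlink⟩, rfl⟩
    have hτs : τs ≠ [] := h.2.1
    refine ⟨τs ++ [v], (isNormalDecomp_append_singleton_iff hτs).mpr ?_, by simp⟩
    rw [← h.1]
    exact ⟨h, rfl, hlink⟩

theorem card_linkedBlocks {u : Word} (hu : u ≠ []) (k : ℕ) :
    Nat.card (linkedBlocks u k) = 2 ^ k - 2 := by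
  have hlast : u.getLast? = some (u.getLast hu) := List.getLast?_eq_getLast_of_ne_nil hu
  simp only [linkedBlocks, Linked, hlast, Option.mem_some_iff, exists_eq_left']
  exact card_words_toFinset_eq_of_card_eq_two (by simp) k

theorem Wcount_append_singleton {ks : List ℕ} (hks : ks ≠ []) (k : ℕ) :
    Wcount (ks ++ [k]) = (2 ^ k - 2) * Wcount ks := by
  let concat (p : Σ u : normalWords ks, linkedBlocks u k) : Word := p.1.1 ++ p.2.1
  have concat_injective : Injective concat := by
    rintro ⟨⟨u, hu⟩, ⟨v, hv⟩⟩ ⟨⟨u', hu'⟩, ⟨v', hv'⟩⟩ h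
    obtain ⟨rfl, rfl⟩ := List.append_inj h
      ((length_of_mem_normalWords hu).trans (length_of_mem_normalWords hu').symm)
    rfl
  have range_concat : Set.range concat = normalWords (ks ++ [k]) := by
    ext σ
    rw [mem_normalWords_append_singleton_iff hks]
    simp [concat, eq_comm]
  have : Fintype (normalWords ks) := ((List.finite_length_eq Letter ks.sum).subset
    fun _ => length_of_mem_normalWords).fintype
  have (u : Word) : Finite (linkedBlocks u k) :=
    ((List.finite_length_eq Letter k).subset fun _ hv => hv.1).to_subtype
  calc Wcount (ks ++ [k]) = Nat.card (Σ u : normalWords ks, linkedBlocks u k) := by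
        rw [Wcount, ← Nat.card_range_of_injective concat_injective, range_concat]; rfl
    _ = ∑ u : normalWords ks, (2 ^ k - 2) := by
        rw [Nat.card_sigma]
        exact Finset.sum_congr rfl fun u _ => card_linkedBlocks (ne_nil_of_mem_normalWords u.2) k
    _ = (2 ^ k - 2) * Wcount ks := by
        rw [Finset.sum_const, smul_eq_mul, mul_comm, Finset.card_univ, ← Nat.card_eq_fintype_card]
        rfl

theorem Wcount_append_last_general (k₁ : ℕ) (ms : List ℕ) (kl : ℕ) :
    Wcount ((k₁ :: ms) ++ [kl]) = (2 ^ kl - 2) * Wcount (k₁ :: ms) :=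
  Wcount_append_singleton (List.cons_ne_nil _ _) kl

/-- For `l ≥ 2`: `W_{k₁⋯k_{l−1}k_l} = (2^{k_l} − 2) · W_{k₁⋯k_{l−1}}`. -/
theorem Wcount_append_last (k₁ : ℕ) (ms : List ℕ) (kl : ℕ)
    (h1 : 1 ≤ k₁) (h2 : ∀ m ∈ ms, 2 ≤ m) (h3 : 2 ≤ kl) :
    Wcount ((k₁ :: ms) ++ [kl]) = (2 ^ kl - 2) * Wcount (k₁ :: ms) :=
  Wcount_append_last_general k₁ ms kl
end
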